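/- The graph mean field model has at most one stationary point: if s* and ŝ* are two stationary points of the ODE system ṡ_{k,i} = x_cλ(s_{k,i-1} − s_{k,i})·z_{k,i}(s) − μ(s_{k,i} − s_{k,i+1}) within the state space, then s* = ŝ*. -/

import Mathlib

/-!
Stationary points are the fixed points of the explicit Euler step `u ↦ u + h • drift u`, which
for small `h` preserves the state space and the coordinatewise order. The step maps `s ⊓ t` below
itself, so its iterates decrease to a stationary point `w ≤ s ⊓ t`; it remains to show that
comparable stationary points `w ≤ v` coincide.

Summing the stationarity equations over degrees with weights `p k` and over all levels above `i`
gives `μ S_{i+1} = (x_cλ / k̄) M_i S_i` for `S_i = Σ_k p_k v_{k,i}` and `M_i = Σ_k k p_k v_{k,i}`.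
Inductively, `S` and `M` agree for `w` and `v`, and with `w ≤ v` this forces
`p_k w_{k,i} = p_k v_{k,i}`. Then `z(w) = z(v)`, and for each degree the increments of both
sequences obey the same linear recurrence; as both start at `1` and tend to `0`, they coincide.
-/

open Finset Filter

/-- `zfun K p kbar s k i` is the quantity `z_{k,i+1}(s)` of the graph mean field model:
`(1/2) * Σ_{k'∈K} ((k'+k)/k̄) p(k') (s_{k',i} + s_{k',i+1})`. -/
noncomputable def zfun (K : Finset ℕ) (p : ℕ → ℝ) (kbar : ℝ) (s : ℕ → ℕ → ℝ) (k i : ℕ) : ℝ :=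
  (1/2) * ∑ k' ∈ K, (((k' : ℝ) + (k : ℝ)) / kbar) * p k' * (s k' i + s k' (i+1))

open Topology

section Moments

variable {K : Finset ℕ} {p : ℕ → ℝ} {kbar : ℝ}

variable (K p) in
def weightedSum (u : ℕ → ℕ → ℝ) (i : ℕ) : ℝ := ∑ k ∈ K, p k * u k i

variable (K p) in
def degWeightedSum (u : ℕ → ℕ → ℝ) (i : ℕ) : ℝ := ∑ k ∈ K, p k * k * u k i

lemma zfun_eq (u : ℕ → ℕ → ℝ) (k i : ℕ) :
    zfun K p kbar u k i = (degWeightedSum K p u i + degWeightedSum K p u (i + 1)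
      + k * (weightedSum K p u i + weightedSum K p u (i + 1))) / (2 * kbar) := by
  simp only [zfun, weightedSum, degWeightedSum, mul_sum, ← sum_add_distrib, sum_div]
  exact sum_congr rfl fun k' _ => by ring

lemma zfun_mono (hp : ∀ k ∈ K, 0 ≤ p k) (hkbar : 0 ≤ kbar) {u v : ℕ → ℕ → ℝ}
    (huv : ∀ k ∈ K, ∀ i, u k i ≤ v k i) (k i : ℕ) :
    zfun K p kbar u k i ≤ zfun K p kbar v k i := by
  unfold zfun
  gcongr with k' hk'
  · exact mul_nonneg (by positivity) (hp k' hk')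
  · exact huv k' hk' i
  · exact huv k' hk' (i + 1)

lemma zfun_nonneg (hp : ∀ k ∈ K, 0 ≤ p k) (hkbar : 0 ≤ kbar) {u : ℕ → ℕ → ℝ}
    (hu : ∀ k ∈ K, ∀ i, 0 ≤ u k i) (k i : ℕ) : 0 ≤ zfun K p kbar u k i := by
  simpa [zfun] using zfun_mono hp hkbar (u := 0) hu k i

lemma zfun_succ_le (hp : ∀ k ∈ K, 0 ≤ p k) (hkbar : 0 ≤ kbar) {u : ℕ → ℕ → ℝ}
    (hu : ∀ k ∈ K, ∀ i, u k (i + 1) ≤ u k i) (k i : ℕ) :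
    zfun K p kbar u k (i + 1) ≤ zfun K p kbar u k i :=
  zfun_mono hp hkbar (u := fun k i => u k (i + 1)) hu k i

lemma zfun_le (hp : ∀ k ∈ K, 0 ≤ p k) (hpsum : ∑ k ∈ K, p k = 1)
    (hkbar : kbar = ∑ k ∈ K, p k * (k : ℝ)) (hkpos : 0 < kbar) {u : ℕ → ℕ → ℝ}
    (hu : ∀ k ∈ K, ∀ i, u k i ≤ 1) (k i : ℕ) :
    zfun K p kbar u k i ≤ 1 + k / kbar := by
  refine (zfun_mono hp hkpos.le (v := 1) hu k i).trans_eq ?_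
  simp only [zfun_eq, weightedSum, degWeightedSum, Pi.one_apply, mul_one, hpsum, ← hkbar]
  field_simp
  ring

lemma weightedSum_sub (u : ℕ → ℕ → ℝ) (i j : ℕ) :
    weightedSum K p u i - weightedSum K p u j = ∑ k ∈ K, p k * (u k i - u k j) := by
  simp only [weightedSum, ← sum_sub_distrib, mul_sub]

lemma degWeightedSum_sub (u : ℕ → ℕ → ℝ) (i j : ℕ) :
    degWeightedSum K p u i - degWeightedSum K p u j = ∑ k ∈ K, p k * k * (u k i - u k j) := by
  simp only [degWeightedSum, ← sum_sub_distrib, mul_sub]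

lemma sum_mul_sub_mul_zfun (u : ℕ → ℕ → ℝ) (i : ℕ) :
    ∑ k ∈ K, p k * ((u k i - u k (i + 1)) * zfun K p kbar u k i)
      = (degWeightedSum K p u i * weightedSum K p u i
          - degWeightedSum K p u (i + 1) * weightedSum K p u (i + 1)) / kbar := by
  set A := degWeightedSum K p u i + degWeightedSum K p u (i + 1)
  set B := weightedSum K p u i + weightedSum K p u (i + 1)
  calc ∑ k ∈ K, p k * ((u k i - u k (i + 1)) * zfun K p kbar u k i)
      = (A * ∑ k ∈ K, p k * (u k i - u k (i + 1))
          + B * ∑ k ∈ K, p k * k * (u k i - u k (i + 1))) / (2 * kbar) := by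
        simp only [zfun_eq, mul_sum, ← sum_add_distrib, sum_div]
        exact sum_congr rfl fun k _ => by ring
    _ = _ := by
        rw [← weightedSum_sub, ← degWeightedSum_sub]
        ring

lemma weightedSum_congr {u v : ℕ → ℕ → ℝ} {i : ℕ} (h : ∀ k ∈ K, p k * u k i = p k * v k i) :
    weightedSum K p u i = weightedSum K p v i :=
  sum_congr rfl h

lemma degWeightedSum_congr {u v : ℕ → ℕ → ℝ} {i : ℕ} (h : ∀ k ∈ K, p k * u k i = p k * v k i) :
    degWeightedSum K p u i = degWeightedSum K p v i :=
  sum_congr rfl fun k hk => by rw [mul_right_comm, h k hk, mul_right_comm]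

end Moments

lemma tendsto_sum_mul_of_tendsto_zero {K : Finset ℕ} {u : ℕ → ℕ → ℝ}
    (hu : ∀ k ∈ K, Tendsto (u k) atTop (𝓝 0)) (c : ℕ → ℝ) :
    Tendsto (fun i => ∑ k ∈ K, c k * u k i) atTop (𝓝 0) := by
  simpa using tendsto_finsetSum K fun k hk => (hu k hk).const_mul (c k)

lemma eq_zero_of_tendsto_of_succ_eq {f : ℕ → ℝ} (hf : ∀ n, f (n + 1) = f n)
    (hlim : Tendsto f atTop (𝓝 0)) (n : ℕ) : f n = 0 := by
  have hconst : f = fun _ => f 0 := funext fun n => by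
    induction n with
    | zero => rfl
    | succ n ih => rw [hf, ih]
  rw [hconst] at hlim ⊢
  exact tendsto_const_nhds_iff.mp hlim

lemma eq_of_increment_recurrence {mu L : ℝ} (hmu : mu ≠ 0) {a b c : ℕ → ℝ}
    (ha : ∀ i, mu * (a (i + 1) - a (i + 2)) = c i * (a i - a (i + 1)))
    (hb : ∀ i, mu * (b (i + 1) - b (i + 2)) = c i * (b i - b (i + 1)))
    (h0 : a 0 = b 0) (haL : Tendsto a atTop (𝓝 L)) (hbL : Tendsto b atTop (𝓝 L))
    (hne : a 0 ≠ L) : a = b := by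
  set d := fun i => a i - a (i + 1)
  set e := fun i => b i - b (i + 1)
  have hd : ∀ i, mu * d (i + 1) = c i * d i := ha
  have he : ∀ i, mu * e (i + 1) = c i * e i := hb
  have cross : ∀ i, e 0 * d i = d 0 * e i := by
    intro i
    induction i with
    | zero => ring
    | succ i ih =>
      exact mul_left_cancel₀ hmu (by linear_combination e 0 * hd i + c i * ih - d 0 * he i)
  have hpartial : ∀ N, e 0 * (a 0 - a N) = d 0 * (b 0 - b N) := fun N => by
    rw [← sum_range_sub', ← sum_range_sub', mul_sum, mul_sum]
    exact sum_congr rfl fun i _ => cross i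
  have hlim : e 0 * (a 0 - L) = d 0 * (b 0 - L) := tendsto_nhds_unique
    (((haL.const_sub (a 0)).const_mul (e 0)).congr hpartial) ((hbL.const_sub (b 0)).const_mul (d 0))
  have hed : e 0 = d 0 := mul_right_cancel₀ (sub_ne_zero.mpr hne) (by rw [hlim, h0])
  have hd0 : d 0 ≠ 0 := by
    intro hd0
    have hzero : ∀ i, d i = 0 := fun i => by
      induction i with
      | zero => exact hd0
      | succ i ih => exact (mul_eq_zero.mp ((hd i).trans (by rw [ih, mul_zero]))).resolve_left hmu
    refine hne (tendsto_nhds_unique (tendsto_const_nhds.congr fun N => ?_) haL)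
    rw [← sub_eq_zero, ← sum_range_sub']
    exact sum_eq_zero fun i _ => hzero i
  have hde : ∀ i, d i = e i := fun i => mul_left_cancel₀ hd0 (by rw [← cross, hed])
  funext i
  induction i with
  | zero => exact h0
  | succ i ih => linarith [hde i]

section Stationary

variable {K : Finset ℕ} {p : ℕ → ℝ} {kbar xcl mu : ℝ}

variable (K p kbar xcl mu) in
/-- `drift K p kbar xcl mu u k i` is the right-hand side of the ODE for `s_{k,i+1}`. -/
noncomputable def drift (u : ℕ → ℕ → ℝ) (k i : ℕ) : ℝ :=
  xcl * (u k i - u k (i + 1)) * zfun K p kbar u k i - mu * (u k (i + 1) - u k (i + 2))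

variable (K p kbar xcl mu) in
def IsStationaryPoint (u : ℕ → ℕ → ℝ) : Prop := ∀ k ∈ K, ∀ i, drift K p kbar xcl mu u k i = 0

/-- By `sum_mul_sub_mul_zfun`, the `p`-weighted sum of the stationarity equations at level `j` says
that the difference of the two sides below does not depend on `i`; it tends to `0`. -/
lemma mul_weightedSum_succ {u : ℕ → ℕ → ℝ} (hu : IsStationaryPoint K p kbar xcl mu u)
    (hlim : ∀ k ∈ K, Tendsto (u k) atTop (𝓝 0)) (i : ℕ) :
    mu * weightedSum K p u (i + 1)
      = xcl / kbar * (degWeightedSum K p u i * weightedSum K p u i) := by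
  rw [← sub_eq_zero]
  refine eq_zero_of_tendsto_of_succ_eq (f := fun j => mu * weightedSum K p u (j + 1)
    - xcl / kbar * (degWeightedSum K p u j * weightedSum K p u j)) (fun j => ?_) ?_ i
  · have hsum : xcl * ∑ k ∈ K, p k * ((u k j - u k (j + 1)) * zfun K p kbar u k j)
        - mu * ∑ k ∈ K, p k * (u k (j + 1) - u k (j + 2)) = 0 := by
      rw [mul_sum, mul_sum, ← sum_sub_distrib]
      exact sum_eq_zero fun k hk => by
        have h := hu k hk j; unfold drift at h; linear_combination p k * h
    rw [sum_mul_sub_mul_zfun, ← weightedSum_sub] at hsum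
    linear_combination hsum
  · have hS := tendsto_sum_mul_of_tendsto_zero hlim p
    have hM := tendsto_sum_mul_of_tendsto_zero hlim (fun k => p k * k)
    have := ((hS.comp (tendsto_add_atTop_nat 1)).const_mul mu).sub
      ((hM.mul hS).const_mul (xcl / kbar))
    rw [mul_zero, mul_zero, mul_zero, sub_zero] at this
    exact this

lemma mul_eq_mul_of_le_of_isStationaryPoint (hp : ∀ k ∈ K, 0 ≤ p k) (hmu : mu ≠ 0)
    {u v : ℕ → ℕ → ℝ} (hu : IsStationaryPoint K p kbar xcl mu u)
    (hv : IsStationaryPoint K p kbar xcl mu v) (hu0 : ∀ k ∈ K, u k 0 = 1)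
    (hv0 : ∀ k ∈ K, v k 0 = 1) (hulim : ∀ k ∈ K, Tendsto (u k) atTop (𝓝 0))
    (hvlim : ∀ k ∈ K, Tendsto (v k) atTop (𝓝 0)) (huv : ∀ k ∈ K, ∀ i, u k i ≤ v k i) (i : ℕ) :
    ∀ k ∈ K, p k * u k i = p k * v k i := by
  induction i with
  | zero => intro k hk; rw [hu0 k hk, hv0 k hk]
  | succ i ih =>
    have hS : weightedSum K p u (i + 1) = weightedSum K p v (i + 1) := mul_left_cancel₀ hmu <| by
      rw [mul_weightedSum_succ hu hulim, mul_weightedSum_succ hv hvlim, weightedSum_congr ih,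
        degWeightedSum_congr ih]
    have hgap : ∑ k ∈ K, (p k * v k (i + 1) - p k * u k (i + 1)) = 0 := by
      rw [sum_sub_distrib, ← weightedSum, ← weightedSum, hS, sub_self]
    intro k hk
    have := (sum_eq_zero_iff_of_nonneg fun k hk =>
      sub_nonneg.mpr (mul_le_mul_of_nonneg_left (huv k hk (i + 1)) (hp k hk))).mp hgap k hk
    linarith

lemma eq_of_le_of_isStationaryPoint (hp : ∀ k ∈ K, 0 ≤ p k) (hmu : mu ≠ 0)
    {u v : ℕ → ℕ → ℝ} (hu : IsStationaryPoint K p kbar xcl mu u)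
    (hv : IsStationaryPoint K p kbar xcl mu v) (hu0 : ∀ k ∈ K, u k 0 = 1)
    (hv0 : ∀ k ∈ K, v k 0 = 1) (hulim : ∀ k ∈ K, Tendsto (u k) atTop (𝓝 0))
    (hvlim : ∀ k ∈ K, Tendsto (v k) atTop (𝓝 0)) (huv : ∀ k ∈ K, ∀ i, u k i ≤ v k i) :
    ∀ k ∈ K, u k = v k := by
  have hpuv := mul_eq_mul_of_le_of_isStationaryPoint hp hmu hu hv hu0 hv0 hulim hvlim huv
  have hz : ∀ k i, zfun K p kbar u k i = zfun K p kbar v k i := fun k i => by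
    rw [zfun_eq, zfun_eq, weightedSum_congr (hpuv i), weightedSum_congr (hpuv (i + 1)),
      degWeightedSum_congr (hpuv i), degWeightedSum_congr (hpuv (i + 1))]
  intro k hk
  refine eq_of_increment_recurrence hmu (c := fun i => xcl * zfun K p kbar u k i) (fun i => ?_)
    (fun i => ?_) (by rw [hu0 k hk, hv0 k hk]) (hulim k hk) (hvlim k hk) (by simp [hu0 k hk])
  · have h := hu k hk i
    unfold drift at h
    linear_combination -h
  · have h := hv k hk i
    unfold drift at h
    rw [hz]
    linear_combination -h

end Stationary

/-- The left side is `(1 - h (mu + xcl z)) b + h xcl z a + h mu c`, a combination with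
nonnegative weights. -/
lemma add_mul_drift_le_add_mul_drift {h xcl mu a b c z a' b' c' z' : ℝ} (hh : 0 ≤ h)
    (hx : 0 ≤ xcl) (hmu : 0 ≤ mu) (hz : 0 ≤ z) (hzz' : z ≤ z') (hstep : h * (mu + xcl * z) ≤ 1)
    (ha : a ≤ a') (hb : b ≤ b') (hc : c ≤ c') (hb'a' : b' ≤ a') :
    b + h * (xcl * (a - b) * z - mu * (b - c))
      ≤ b' + h * (xcl * (a' - b') * z' - mu * (b' - c')) := by
  nlinarith [mul_nonneg (sub_nonneg.2 hb) (by linarith : 0 ≤ 1 - h * (mu + xcl * z)),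
    mul_nonneg (mul_nonneg (mul_nonneg hh hx) (sub_nonneg.2 hb'a')) (sub_nonneg.2 hzz'),
    mul_nonneg (mul_nonneg (mul_nonneg hh hx) hz) (sub_nonneg.2 ha),
    mul_nonneg (mul_nonneg hh hmu) (sub_nonneg.2 hc)]

structure InStateSpace (K : Finset ℕ) (u : ℕ → ℕ → ℝ) : Prop where
  zero : ∀ k ∈ K, u k 0 = 1
  succ_le : ∀ k ∈ K, ∀ i, u k (i + 1) ≤ u k i
  nonneg : ∀ k ∈ K, ∀ i, 0 ≤ u k i
  le_one : ∀ k ∈ K, ∀ i, u k i ≤ 1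

lemma InStateSpace.inf {K : Finset ℕ} {u v : ℕ → ℕ → ℝ} (hu : InStateSpace K u)
    (hv : InStateSpace K v) : InStateSpace K (u ⊓ v) where
  zero k hk := by simp [hu.zero k hk, hv.zero k hk]
  succ_le k hk i := inf_le_inf (hu.succ_le k hk i) (hv.succ_le k hk i)
  nonneg k hk i := le_inf (hu.nonneg k hk i) (hv.nonneg k hk i)
  le_one k hk i := inf_le_left.trans (hu.le_one k hk i)

lemma InStateSpace.of_tendsto {K : Finset ℕ} {u : ℕ → ℕ → ℕ → ℝ} {w : ℕ → ℕ → ℝ}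
    (hu : ∀ n, InStateSpace K (u n))
    (hlim : ∀ k ∈ K, ∀ i, Tendsto (fun n => u n k i) atTop (𝓝 (w k i))) : InStateSpace K w where
  zero k hk := tendsto_nhds_unique (hlim k hk 0)
    (tendsto_const_nhds.congr fun n => ((hu n).zero k hk).symm)
  succ_le k hk i := le_of_tendsto_of_tendsto' (hlim k hk (i + 1)) (hlim k hk i)
    fun n => (hu n).succ_le k hk i
  nonneg k hk i := ge_of_tendsto' (hlim k hk i) fun n => (hu n).nonneg k hk i
  le_one k hk i := le_of_tendsto' (hlim k hk i) fun n => (hu n).le_one k hk i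

section EulerStep

variable {K : Finset ℕ} {p : ℕ → ℝ} {kbar xcl mu h : ℝ}

variable (K p kbar xcl mu h) in
noncomputable def eulerStep (u : ℕ → ℕ → ℝ) : ℕ → ℕ → ℝ
  | _, 0 => 1
  | k, i + 1 => u k (i + 1) + h * drift K p kbar xcl mu u k i

@[simp]
lemma eulerStep_zero (u : ℕ → ℕ → ℝ) (k : ℕ) : eulerStep K p kbar xcl mu h u k 0 = 1 := rfl

lemma eulerStep_succ (u : ℕ → ℕ → ℝ) (k i : ℕ) :
    eulerStep K p kbar xcl mu h u k (i + 1) = u k (i + 1) + h * drift K p kbar xcl mu u k i := rfl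

lemma eulerStep_le_eulerStep (hp : ∀ k ∈ K, 0 ≤ p k) (hkbar : 0 ≤ kbar) (hx : 0 ≤ xcl)
    (hmu : 0 ≤ mu) (hh : 0 ≤ h) {u v : ℕ → ℕ → ℝ}
    (hstep : ∀ k ∈ K, ∀ i, h * (mu + xcl * zfun K p kbar u k i) ≤ 1)
    (hu : ∀ k ∈ K, ∀ i, 0 ≤ u k i) (hv : ∀ k ∈ K, ∀ i, v k (i + 1) ≤ v k i)
    (huv : ∀ k ∈ K, ∀ i, u k i ≤ v k i) :
    ∀ k ∈ K, ∀ i, eulerStep K p kbar xcl mu h u k i ≤ eulerStep K p kbar xcl mu h v k i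
  | _, _, 0 => le_rfl
  | k, hk, i + 1 => add_mul_drift_le_add_mul_drift hh hx hmu (zfun_nonneg hp hkbar hu k i)
      (zfun_mono hp hkbar huv k i) (hstep k hk i) (huv k hk i) (huv k hk (i + 1))
      (huv k hk (i + 2)) (hv k hk i)

lemma InStateSpace.eulerStep (hp : ∀ k ∈ K, 0 ≤ p k) (hkbar : 0 ≤ kbar) (hx : 0 ≤ xcl)
    (hmu : 0 ≤ mu) (hh : 0 ≤ h) {u : ℕ → ℕ → ℝ} (hu : InStateSpace K u)
    (hstep : ∀ k ∈ K, ∀ i, h * (mu + xcl * zfun K p kbar u k i) ≤ 1) :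
    InStateSpace K (_root_.eulerStep K p kbar xcl mu h u) := by
  have hz := zfun_nonneg hp hkbar hu.nonneg
  have hle_one : ∀ k ∈ K, ∀ i, _root_.eulerStep K p kbar xcl mu h u k i ≤ 1
    | _, _, 0 => le_rfl
    | k, hk, i + 1 => by
      simpa [eulerStep_succ, drift] using add_mul_drift_le_add_mul_drift hh hx hmu (hz k i) le_rfl
        (hstep k hk i) (hu.le_one k hk i) (hu.le_one k hk (i + 1)) (hu.le_one k hk (i + 2)) le_rfl
  refine ⟨fun _ _ => rfl, fun k hk i => ?_, fun k hk i => ?_, hle_one⟩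
  · cases i with
    | zero => exact hle_one k hk 1
    | succ i =>
      rw [eulerStep_succ, eulerStep_succ]
      exact add_mul_drift_le_add_mul_drift hh hx hmu (hz k (i + 1))
        (zfun_succ_le hp hkbar hu.succ_le k i) (hstep k hk (i + 1)) (hu.succ_le k hk i)
        (hu.succ_le k hk (i + 1)) (hu.succ_le k hk (i + 2)) (hu.succ_le k hk i)
  · cases i with
    | zero => exact zero_le_one
    | succ i =>
      simpa [eulerStep_succ, drift] using add_mul_drift_le_add_mul_drift hh hx hmu (hz k i) le_rfl
        (hstep k hk i) (hu.nonneg k hk i) (hu.nonneg k hk (i + 1)) (hu.nonneg k hk (i + 2))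
        (hu.succ_le k hk i)

lemma IsStationaryPoint.eulerStep_eq {u : ℕ → ℕ → ℝ} (hu : IsStationaryPoint K p kbar xcl mu u)
    (hu0 : ∀ k ∈ K, u k 0 = 1) : ∀ k ∈ K, ∀ i, eulerStep K p kbar xcl mu h u k i = u k i
  | k, hk, 0 => (hu0 k hk).symm
  | k, hk, i + 1 => by rw [eulerStep_succ, hu k hk i, mul_zero, add_zero]

lemma isStationaryPoint_of_eulerStep_eq (hh : h ≠ 0) {u : ℕ → ℕ → ℝ}
    (hfix : ∀ k ∈ K, ∀ i, eulerStep K p kbar xcl mu h u k i = u k i) :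
    IsStationaryPoint K p kbar xcl mu u := fun k hk i => by
  simpa [eulerStep_succ, hh] using hfix k hk (i + 1)

lemma tendsto_zfun {u : ℕ → ℕ → ℕ → ℝ} {w : ℕ → ℕ → ℝ}
    (hlim : ∀ k ∈ K, ∀ i, Tendsto (fun n => u n k i) atTop (𝓝 (w k i))) (k i : ℕ) :
    Tendsto (fun n => zfun K p kbar (u n) k i) atTop (𝓝 (zfun K p kbar w k i)) :=
  (tendsto_finsetSum K fun k' hk' =>
    ((hlim k' hk' i).add (hlim k' hk' (i + 1))).const_mul _).const_mul _

lemma tendsto_eulerStep {u : ℕ → ℕ → ℕ → ℝ} {w : ℕ → ℕ → ℝ}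
    (hlim : ∀ k ∈ K, ∀ i, Tendsto (fun n => u n k i) atTop (𝓝 (w k i))) :
    ∀ k ∈ K, ∀ i, Tendsto (fun n => eulerStep K p kbar xcl mu h (u n) k i) atTop
      (𝓝 (eulerStep K p kbar xcl mu h w k i))
  | _, _, 0 => tendsto_const_nhds
  | k, hk, i + 1 => (hlim k hk (i + 1)).add <| Tendsto.const_mul h <|
      ((((hlim k hk i).sub (hlim k hk (i + 1))).const_mul xcl).mul (tendsto_zfun hlim k i)).sub
      (((hlim k hk (i + 1)).sub (hlim k hk (i + 2))).const_mul mu)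

lemma eulerStep_inf_le (hp : ∀ k ∈ K, 0 ≤ p k) (hkbar : 0 ≤ kbar) (hx : 0 ≤ xcl)
    (hmu : 0 ≤ mu) (hh : 0 ≤ h) {s t : ℕ → ℕ → ℝ} (hs : InStateSpace K s)
    (ht : InStateSpace K t) (hstep : ∀ k ∈ K, ∀ i, h * (mu + xcl * zfun K p kbar (s ⊓ t) k i) ≤ 1)
    (hsstat : IsStationaryPoint K p kbar xcl mu s) (htstat : IsStationaryPoint K p kbar xcl mu t) :
    ∀ k ∈ K, ∀ i, eulerStep K p kbar xcl mu h (s ⊓ t) k i ≤ (s ⊓ t) k i := fun k hk i =>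
  le_inf
    ((eulerStep_le_eulerStep hp hkbar hx hmu hh hstep (hs.inf ht).nonneg hs.succ_le
      (fun _ _ _ => inf_le_left) k hk i).trans_eq (hsstat.eulerStep_eq hs.zero k hk i))
    ((eulerStep_le_eulerStep hp hkbar hx hmu hh hstep (hs.inf ht).nonneg ht.succ_le
      (fun _ _ _ => inf_le_right) k hk i).trans_eq (htstat.eulerStep_eq ht.zero k hk i))

lemma exists_isStationaryPoint_le (hp : ∀ k ∈ K, 0 ≤ p k) (hkbar : 0 ≤ kbar) (hx : 0 ≤ xcl)
    (hmu : 0 ≤ mu) (hh : 0 < h)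
    (hstep : ∀ u, InStateSpace K u → ∀ k ∈ K, ∀ i, h * (mu + xcl * zfun K p kbar u k i) ≤ 1)
    {m : ℕ → ℕ → ℝ} (hm : InStateSpace K m)
    (hsub : ∀ k ∈ K, ∀ i, eulerStep K p kbar xcl mu h m k i ≤ m k i) :
    ∃ w, InStateSpace K w ∧ IsStationaryPoint K p kbar xcl mu w ∧ ∀ k ∈ K, ∀ i, w k i ≤ m k i := by
  set F := eulerStep K p kbar xcl mu h
  have hstate : ∀ n, InStateSpace K (F^[n] m) := by
    intro n
    induction n with
    | zero => exact hm
    | succ n ih =>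
      rw [Function.iterate_succ_apply']
      exact ih.eulerStep hp hkbar hx hmu hh.le (hstep _ ih)
  have hsub_iterate : ∀ n, ∀ k ∈ K, ∀ i, F (F^[n] m) k i ≤ F^[n] m k i := by
    intro n
    induction n with
    | zero => exact hsub
    | succ n ih =>
      have hFn := (hstate n).eulerStep hp hkbar hx hmu hh.le (hstep _ (hstate n))
      rw [Function.iterate_succ_apply']
      exact eulerStep_le_eulerStep hp hkbar hx hmu hh.le (hstep _ hFn) hFn.nonneg
        (hstate n).succ_le ih
  have hbdd : ∀ k ∈ K, ∀ i, BddBelow (Set.range fun n => F^[n] m k i) :=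
    fun k hk i => ⟨0, by rintro _ ⟨n, rfl⟩; exact (hstate n).nonneg k hk i⟩
  have hlim : ∀ k ∈ K, ∀ i, Tendsto (fun n => F^[n] m k i) atTop (𝓝 (⨅ n, F^[n] m k i)) :=
    fun k hk i => tendsto_atTop_ciInf (antitone_nat_of_succ_le fun n => by
      rw [Function.iterate_succ_apply']; exact hsub_iterate n k hk i) (hbdd k hk i)
  have hw := InStateSpace.of_tendsto hstate hlim
  refine ⟨_, hw, isStationaryPoint_of_eulerStep_eq hh.ne' fun k hk i => ?_,
    fun k hk i => ciInf_le (hbdd k hk i) 0⟩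
  have hshift := (hlim k hk i).comp (tendsto_add_atTop_nat 1)
  simp only [Function.comp_def, Function.iterate_succ_apply'] at hshift
  exact tendsto_nhds_unique (tendsto_eulerStep hlim k hk i) hshift

end EulerStep

lemma inv_mul_add_mul_zfun_le_one {K : Finset ℕ} {p : ℕ → ℝ} {kbar xcl mu : ℝ} {kmax k : ℕ}
    (hp : ∀ k ∈ K, 0 ≤ p k) (hpsum : ∑ k ∈ K, p k = 1)
    (hkbar : kbar = ∑ k ∈ K, p k * (k : ℝ)) (hkpos : 0 < kbar) (hkmax : ∀ k ∈ K, k ≤ kmax)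
    (hx : 0 ≤ xcl) (hmu : 0 < mu) {u : ℕ → ℕ → ℝ} (hu : ∀ k ∈ K, ∀ i, u k i ≤ 1) (hk : k ∈ K)
    (i : ℕ) :
    (mu + xcl * (1 + kmax / kbar))⁻¹ * (mu + xcl * zfun K p kbar u k i) ≤ 1 := by
  rw [inv_mul_le_one₀ (by positivity)]
  gcongr
  refine (zfun_le hp hpsum hkbar hkpos hu k i).trans ?_
  gcongr
  exact_mod_cast hkmax k hk

theorem stationary_point_unique_general (K : Finset ℕ) (p : ℕ → ℝ)
    (hp : ∀ k ∈ K, 0 ≤ p k) (hpsum : ∑ k ∈ K, p k = 1)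
    (kbar : ℝ) (hkbar : kbar = ∑ k ∈ K, p k * (k : ℝ)) (hkpos : 0 < kbar)
    (kmax : ℕ) (hkmax : ∀ k ∈ K, k ≤ kmax)
    (xcl mu : ℝ) (hx : 0 < xcl) (hmu : 0 < mu)
    (s t : ℕ → ℕ → ℝ)
    (hs0 : ∀ k, s k 0 = 1) (hsmono : ∀ k i, s k (i+1) ≤ s k i)
    (hsnn : ∀ k i, 0 ≤ s k i) (hsle1 : ∀ k i, s k i ≤ 1)
    (hslim : ∀ k ∈ K, Filter.Tendsto (fun i => s k i) Filter.atTop (nhds 0))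
    (ht0 : ∀ k, t k 0 = 1) (htmono : ∀ k i, t k (i+1) ≤ t k i)
    (htnn : ∀ k i, 0 ≤ t k i) (htle1 : ∀ k i, t k i ≤ 1)
    (htlim : ∀ k ∈ K, Filter.Tendsto (fun i => t k i) Filter.atTop (nhds 0))
    (hsstat : ∀ k ∈ K, ∀ i : ℕ,
      xcl * (s k i - s k (i+1)) * zfun K p kbar s k i - mu * (s k (i+1) - s k (i+2)) = 0)
    (htstat : ∀ k ∈ K, ∀ i : ℕ,
      xcl * (t k i - t k (i+1)) * zfun K p kbar t k i - mu * (t k (i+1) - t k (i+2)) = 0) :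
    ∀ k ∈ K, ∀ i : ℕ, s k i = t k i := by
  have hstep : ∀ u, InStateSpace K u → ∀ k ∈ K, ∀ i,
      (mu + xcl * (1 + kmax / kbar))⁻¹ * (mu + xcl * zfun K p kbar u k i) ≤ 1 :=
    fun u hu k hk => inv_mul_add_mul_zfun_le_one hp hpsum hkbar hkpos hkmax hx.le hmu hu.le_one hk
  have hs : InStateSpace K s := ⟨fun k _ => hs0 k, fun k _ => hsmono k, fun k _ => hsnn k,
    fun k _ => hsle1 k⟩
  have ht : InStateSpace K t := ⟨fun k _ => ht0 k, fun k _ => htmono k, fun k _ => htnn k,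
    fun k _ => htle1 k⟩
  obtain ⟨w, hw, hwstat, hwle⟩ := exists_isStationaryPoint_le hp hkpos.le hx.le hmu.le
    (by positivity) hstep (hs.inf ht) (eulerStep_inf_le hp hkpos.le hx.le hmu.le (by positivity)
      hs ht (hstep _ (hs.inf ht)) hsstat htstat)
  have hw_eq : ∀ u, InStateSpace K u → IsStationaryPoint K p kbar xcl mu u →
      (∀ k ∈ K, Tendsto (u k) atTop (𝓝 0)) → (∀ k ∈ K, ∀ i, w k i ≤ u k i) → ∀ k ∈ K, w k = u k :=
    fun u hu hustat hulim hwu => eq_of_le_of_isStationaryPoint hp hmu.ne' hwstat hustat hw.zero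
      hu.zero (fun k hk => squeeze_zero (hw.nonneg k hk) (hwu k hk) (hulim k hk)) hulim hwu
  intro k hk i
  rw [← hw_eq s hs hsstat hslim (fun k hk i => (hwle k hk i).trans inf_le_left) k hk,
    hw_eq t ht htstat htlim (fun k hk i => (hwle k hk i).trans inf_le_right) k hk]

/-- The graph mean field model has at most one stationary point in the state space. -/
theorem stationary_point_unique (K : Finset ℕ) (p : ℕ → ℝ)
    (hp : ∀ k ∈ K, 0 ≤ p k) (hpsum : ∑ k ∈ K, p k = 1)
    (kbar : ℝ) (hkbar : kbar = ∑ k ∈ K, p k * (k : ℝ)) (hkpos : 0 < kbar)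
    (kmax : ℕ) (hkmaxmem : kmax ∈ K) (hkmax : ∀ k ∈ K, k ≤ kmax)
    (xcl mu : ℝ) (hx : 0 < xcl) (hmu : 0 < mu)
    (hstab : (1 + (kmax : ℝ) / kbar) / 2 * (xcl / mu) < 1)
    (s t : ℕ → ℕ → ℝ)
    (hs0 : ∀ k, s k 0 = 1) (hsmono : ∀ k i, s k (i+1) ≤ s k i)
    (hsnn : ∀ k i, 0 ≤ s k i) (hsle1 : ∀ k i, s k i ≤ 1)
    (hslim : ∀ k ∈ K, Filter.Tendsto (fun i => s k i) Filter.atTop (nhds 0))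
    (ht0 : ∀ k, t k 0 = 1) (htmono : ∀ k i, t k (i+1) ≤ t k i)
    (htnn : ∀ k i, 0 ≤ t k i) (htle1 : ∀ k i, t k i ≤ 1)
    (htlim : ∀ k ∈ K, Filter.Tendsto (fun i => t k i) Filter.atTop (nhds 0))
    (hsstat : ∀ k ∈ K, ∀ i : ℕ,
      xcl * (s k i - s k (i+1)) * zfun K p kbar s k i - mu * (s k (i+1) - s k (i+2)) = 0)
    (htstat : ∀ k ∈ K, ∀ i : ℕ,
      xcl * (t k i - t k (i+1)) * zfun K p kbar t k i - mu * (t k (i+1) - t k (i+2)) = 0) :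
    ∀ k ∈ K, ∀ i : ℕ, s k i = t k i :=
  stationary_point_unique_general K p hp hpsum kbar hkbar hkpos kmax hkmax xcl mu hx hmu s t hs0
    hsmono hsnn hsle1 hslim ht0 htmono htnn htle1 htlim hsstat htstat
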